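/- Let A ⊆ Z^d be a finite set affinely spanning R^d. Then the sublattice index of A equals the greatest common divisor of the normalized volumes |det(a_1 - a_0, ..., a_d - a_0)| over all (d+1)-tuples (a_0, a_1, ..., a_d) of points of A that are affinely independent. -/

import Mathlib

/-- The subgroup of `ℤᵈ` generated by all differences of points of `A`;
the sublattice index of `A` is the index of this subgroup. -/
def diffLat {d : ℕ} (A : Set (Fin d → ℤ)) : AddSubgroup (Fin d → ℤ) :=
  AddSubgroup.closure {v | ∃ x ∈ A, ∃ y ∈ A, v = x - y}

/-- `A` affinely spans `ℝᵈ`. -/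
def AffSpanning {d : ℕ} (A : Set (Fin d → ℤ)) : Prop :=
  affineSpan ℝ ((fun v : Fin d → ℤ => fun i => (v i : ℝ)) '' A) = ⊤

/-- The normalized volume of the simplex with vertices `f 0, …, f d`. -/
def normVol {d : ℕ} (f : Fin (d + 1) → (Fin d → ℤ)) : ℕ :=
  (Matrix.det (Matrix.of fun i j : Fin d => (f i.succ - f 0) j)).natAbs

/-!
Fix `a₀ ∈ A`; the lattice `L` spanned by the differences of points of `A` is spanned by the
vectors `a - a₀`. An affinely independent simplex of `A` spans a sublattice of `L` whose index
is its normalized volume, so the index of `L` divides every such volume. Conversely, if `c`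
divides all normalized volumes (degenerate simplices have volume `0`), then by multilinearity
of the determinant `c` divides the determinant of every `d`-tuple of vectors of `L`, in
particular of a `ℤ`-basis of `L`, whose determinant is `± [ℤᵈ : L]`.
-/

open Submodule

lemma MultilinearMap.map_mem_of_forall_mem_span {R M N ι : Type*} [Semiring R]
    [AddCommMonoid M] [Module R M] [AddCommMonoid N] [Module R N] [Fintype ι] [DecidableEq ι]
    (D : MultilinearMap R (fun _ : ι => M) N) (P : Submodule R N) {s : Set M}
    (h : ∀ v : ι → M, (∀ i, v i ∈ s) → D v ∈ P) (w : ι → M) (hw : ∀ i, w i ∈ span R s) :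
    D w ∈ P := by
  suffices ∀ S : Finset ι, ∀ w : ι → M, (∀ i ∈ S, w i ∈ span R s) → (∀ i ∉ S, w i ∈ s) → D w ∈ P
    from this Finset.univ w (fun i _ => hw i) (by simp)
  intro S
  induction S using Finset.induction_on with
  | empty => exact fun w _ hs => h w fun i => hs i (Finset.notMem_empty i)
  | insert j S hj ih =>
    intro w hspan hs
    have : span R s ≤ P.comap (D.toLinearMap w j) := by
      rw [span_le]
      intro x hx
      refine ih _ (fun i hi => ?_) (fun i hi => ?_)
      · rw [Function.update_of_ne (ne_of_mem_of_not_mem hi hj)]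
        exact hspan i (Finset.mem_insert_of_mem hi)
      · rcases eq_or_ne i j with rfl | hij
        · simpa using hx
        · rw [Function.update_of_ne hij]
          exact hs i (by simp [hij, hi])
    simpa using this (hspan j (Finset.mem_insert_self j S))

lemma AddSubgroup.index_closure_range_eq_natAbs_det {ι E : Type*} [Fintype ι] [DecidableEq ι]
    [AddCommGroup E] (b : Module.Basis ι ℤ E) {v : ι → E} (hv : LinearIndependent ℤ v) :
    (closure (Set.range v)).index = (b.det v).natAbs := by
  rw [← span_int_eq_addSubgroupClosure, index_eq_natAbs_det b _ (Module.Basis.span hv)]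
  congr 2
  funext i
  rw [Module.Basis.span_apply]

lemma AddSubgroup.dvd_index_of_forall_dvd_det {ι E : Type*} [Fintype ι] [DecidableEq ι]
    [AddCommGroup E] (b : Module.Basis ι ℤ E) (L : AddSubgroup E) {c : ℤ}
    (h : ∀ v : ι → E, (∀ i, v i ∈ L) → c ∣ b.det v) : c ∣ L.index := by
  -- an infinite index is recorded as `0`, which every `c` divides
  rcases eq_or_ne L.index 0 with h0 | h0
  · simp [h0]
  have : L.FiniteIndex := ⟨h0⟩
  have : Module.Free ℤ E := .of_basis b
  have : Module.Finite ℤ E := .of_basis b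
  obtain ⟨n, bL⟩ := L.toIntSubmodule.basisOfPid b
  have hn : Fintype.card (Fin n) = Fintype.card ι := by
    rw [← Module.finrank_eq_card_basis bL, ← Module.finrank_eq_card_basis b]
    exact L.finrank_eq_of_finiteIndex
  let bL' := bL.reindex (Fintype.equivOfCardEq hn)
  rw [L.index_eq_natAbs_det b bL', Int.natCast_natAbs, dvd_abs]
  exact h _ fun i => (bL' i).2

lemma AffSpanning.nonempty {d : ℕ} {A : Set (Fin d → ℤ)} (hA : AffSpanning A) : A.Nonempty := by
  by_contra hA'
  rw [Set.not_nonempty_iff_eq_empty] at hA'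
  simp [AffSpanning, hA'] at hA

lemma normVol_eq_natAbs_det {d : ℕ} (f : Fin (d + 1) → Fin d → ℤ) :
    normVol f = ((Pi.basisFun ℤ (Fin d)).det fun i => f i.succ - f 0).natAbs := by
  rw [Pi.basisFun_det]
  rfl

lemma affineIndependent_iff_normVol_ne_zero {d : ℕ} (f : Fin (d + 1) → Fin d → ℤ) :
    AffineIndependent ℝ (fun k i => (f k i : ℝ)) ↔ normVol f ≠ 0 := by
  rw [affineIndependent_iff_linearIndependent_vsub ℝ _ 0,
    ← linearIndependent_equiv (finSuccAboveEquiv 0), normVol, Int.natAbs_ne_zero,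
    ← (Int.cast_injective (α := ℝ)).ne_iff, Int.cast_zero, Int.cast_det, ← isUnit_iff_ne_zero,
    ← Matrix.isUnit_iff_isUnit_det, ← Matrix.linearIndependent_rows_iff_isUnit]
  congr!
  ext i j
  simp [finSuccAboveEquiv_apply]

lemma sub_mem_diffLat {d : ℕ} {A : Set (Fin d → ℤ)} {x y : Fin d → ℤ} (hx : x ∈ A) (hy : y ∈ A) :
    x - y ∈ diffLat A :=
  AddSubgroup.subset_closure ⟨x, hx, y, hy, rfl⟩

lemma diffLat_eq_closure_sub_image {d : ℕ} {A : Set (Fin d → ℤ)} {a₀ : Fin d → ℤ} (ha₀ : a₀ ∈ A) :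
    diffLat A = AddSubgroup.closure ((· - a₀) '' A) := by
  refine le_antisymm ((AddSubgroup.closure_le _).mpr ?_) ((AddSubgroup.closure_le _).mpr ?_)
  · rintro _ ⟨x, hx, y, hy, rfl⟩
    rw [← sub_sub_sub_cancel_right x y a₀]
    exact sub_mem (AddSubgroup.subset_closure ⟨x, hx, rfl⟩)
      (AddSubgroup.subset_closure ⟨y, hy, rfl⟩)
  · rintro _ ⟨x, hx, rfl⟩
    exact sub_mem_diffLat hx ha₀

lemma index_diffLat_dvd_normVol {d : ℕ} {A : Set (Fin d → ℤ)} {f : Fin (d + 1) → Fin d → ℤ}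
    (hfA : ∀ k, f k ∈ A) (hf : normVol f ≠ 0) : (diffLat A).index ∣ normVol f := by
  have hv : LinearIndependent ℤ fun i : Fin d => f i.succ - f 0 :=
    Matrix.linearIndependent_rows_of_det_ne_zero (Int.natAbs_ne_zero.mp hf)
  rw [normVol_eq_natAbs_det, ← AddSubgroup.index_closure_range_eq_natAbs_det _ hv]
  refine AddSubgroup.index_dvd_of_le ((AddSubgroup.closure_le _).mpr ?_)
  rintro _ ⟨i, rfl⟩
  exact sub_mem_diffLat (hfA _) (hfA 0)

lemma dvd_index_diffLat {d : ℕ} {A : Set (Fin d → ℤ)} {a₀ : Fin d → ℤ} (ha₀ : a₀ ∈ A) {c : ℕ}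
    (hc : ∀ f : Fin (d + 1) → Fin d → ℤ, (∀ k, f k ∈ A) → c ∣ normVol f) :
    c ∣ (diffLat A).index := by
  rw [← Int.natCast_dvd_natCast]
  refine AddSubgroup.dvd_index_of_forall_dvd_det (Pi.basisFun ℤ (Fin d)) _ fun w hw => ?_
  rw [← Ideal.mem_span_singleton]
  refine MultilinearMap.map_mem_of_forall_mem_span _ _ (s := (· - a₀) '' A) ?_ w fun i => ?_
  · intro v hv
    choose a haA hav using hv
    have hdvd := hc (Fin.cons a₀ a) (Fin.cases ha₀ haA)
    rw [normVol_eq_natAbs_det] at hdvd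
    simpa [Ideal.mem_span_singleton, hav, Int.natCast_dvd] using hdvd
  · have hwi := hw i
    rwa [diffLat_eq_closure_sub_image ha₀, ← span_int_eq_addSubgroupClosure] at hwi

theorem stmt5_general {d : ℕ} (A : Set (Fin d → ℤ))
    (hA : AffSpanning A) :
    (∀ f : Fin (d + 1) → (Fin d → ℤ), (∀ k, f k ∈ A) →
        AffineIndependent ℝ (fun k => fun i => ((f k i : ℝ))) →
        (diffLat A).index ∣ normVol f) ∧
    (∀ c : ℕ, (∀ f : Fin (d + 1) → (Fin d → ℤ), (∀ k, f k ∈ A) →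
        AffineIndependent ℝ (fun k => fun i => ((f k i : ℝ))) →
        c ∣ normVol f) → c ∣ (diffLat A).index) := by
  refine ⟨fun f hfA hf => index_diffLat_dvd_normVol hfA
    ((affineIndependent_iff_normVol_ne_zero f).mp hf), fun c hc => ?_⟩
  obtain ⟨a₀, ha₀⟩ := hA.nonempty
  refine dvd_index_diffLat ha₀ fun f hfA => ?_
  by_cases hf : normVol f = 0
  · rw [hf]
    exact dvd_zero c
  · exact hc f hfA ((affineIndependent_iff_normVol_ne_zero f).mpr hf)

/-- The sublattice index of `A` equals the gcd of the normalized volumes of all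
`(d+1)`-tuples of affinely independent points of `A`: it divides all such volumes,
and any common divisor of them divides the index. -/
theorem stmt5 {d : ℕ} (hd : 0 < d) (A : Set (Fin d → ℤ)) (hAfin : A.Finite)
    (hA : AffSpanning A) :
    (∀ f : Fin (d + 1) → (Fin d → ℤ), (∀ k, f k ∈ A) →
        AffineIndependent ℝ (fun k => fun i => ((f k i : ℝ))) →
        (diffLat A).index ∣ normVol f) ∧
    (∀ c : ℕ, (∀ f : Fin (d + 1) → (Fin d → ℤ), (∀ k, f k ∈ A) →
        AffineIndependent ℝ (fun k => fun i => ((f k i : ℝ))) →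
        c ∣ normVol f) → c ∣ (diffLat A).index) :=
  stmt5_general A hA
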